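/- Let T(N) denote the number of congruence classes of unordered triples of pairwise distinct points of the grid [N]×[N] ⊆ ℝ². Then limsup over N → ∞ of T(N)/N⁴ is at most 0.1875. -/

import Mathlib

open Real

noncomputable section

/-- The Euclidean plane. -/
abbrev Plane : Type := EuclideanSpace ℝ (Fin 2)

/-- A point of the plane from coordinates. -/
def pt (x y : ℝ) : Plane := (WithLp.equiv 2 (Fin 2 → ℝ)).symm ![x, y]

/-- The embedding of the integer lattice `ℤ²` into the plane. -/
def toPlane (P : ℤ × ℤ) : Plane := pt P.1 P.2

/-- Membership in the grid `[N] × [N] = {0, 1, …, N-1}²`. -/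
def inGrid (N : ℕ) (P : ℤ × ℤ) : Prop := 0 ≤ P.1 ∧ P.1 < N ∧ 0 ≤ P.2 ∧ P.2 < N

/-- Two sets of points in the plane are congruent if some isometry of `ℝ²`
maps one onto the other. -/
def Cong (S T : Set Plane) : Prop := ∃ f : Plane ≃ᵢ Plane, f '' S = T

/-- The unordered triples of pairwise distinct points of the grid `[N] × [N]`,
viewed as subsets of the plane. -/
def gridTriples (N : ℕ) : Set (Set Plane) :=
  {s | ∃ a b c : ℤ × ℤ, inGrid N a ∧ inGrid N b ∧ inGrid N c ∧
    a ≠ b ∧ a ≠ c ∧ b ≠ c ∧ s = {toPlane a, toPlane b, toPlane c}}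

/-- `T N` is the number of congruence classes of unordered triples of pairwise
distinct points of the grid `[N] × [N]`. -/
def T (N : ℕ) : ℕ :=
  ((fun t => {t' ∈ gridTriples N | Cong t t'}) '' gridTriples N).ncard

/-! ### matrices -/

structure M2 where
  a : ℤ
  b : ℤ
  c : ℤ
  d : ℤ
deriving DecidableEq

def mul2 (x y : M2) : M2 := ⟨x.a*y.a + x.b*y.c, x.a*y.b + x.b*y.d, x.c*y.a + x.d*y.c, x.c*y.b + x.d*y.d⟩
def idM : M2 := ⟨1,0,0,1⟩

abbrev V := (ℤ × ℤ) × (ℤ × ℤ)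

def aAct (A : M2) (q : ℤ × ℤ) : ℤ × ℤ := (A.a * q.1 + A.b * q.2, A.c * q.1 + A.d * q.2)

def act (R A : M2) (p : V) : V :=
  ((R.a * (aAct A p.1).1 + R.b * (aAct A p.2).1, R.a * (aAct A p.1).2 + R.b * (aAct A p.2).2),
   (R.c * (aAct A p.1).1 + R.d * (aAct A p.2).1, R.c * (aAct A p.1).2 + R.d * (aAct A p.2).2))

lemma act_mul (R S A B : M2) (p : V) : act (mul2 R S) (mul2 A B) p = act R A (act S B p) := by
  obtain ⟨⟨u1,u2⟩,v1,v2⟩ := p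
  simp only [act, aAct, mul2, Prod.mk.injEq]
  refine ⟨⟨by ring, by ring⟩, by ring, by ring⟩

lemma act_id (p : V) : act idM idM p = p := by
  obtain ⟨⟨u1,u2⟩,v1,v2⟩ := p
  simp only [act, aAct, idM, Prod.mk.injEq]
  refine ⟨⟨by ring, by ring⟩, by ring, by ring⟩

lemma mul2_assoc (x y z : M2) : mul2 (mul2 x y) z = mul2 x (mul2 y z) := by
  simp only [mul2, M2.mk.injEq]; refine ⟨by ring, by ring, by ring, by ring⟩

lemma mul2_id (x : M2) : mul2 x idM = x ∧ mul2 idM x = x := by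
  simp only [mul2, idM, M2.mk.injEq]
  obtain ⟨a,b,c,d⟩ := x
  norm_num

def Rlist : List M2 := [⟨1,0,0,1⟩, ⟨0,1,1,0⟩, ⟨-1,0,-1,1⟩, ⟨-1,1,-1,0⟩, ⟨0,-1,1,-1⟩, ⟨1,-1,0,-1⟩]
def Alist : List M2 := [⟨1,0,0,1⟩, ⟨0,-1,1,0⟩, ⟨-1,0,0,-1⟩, ⟨0,1,-1,0⟩, ⟨1,0,0,-1⟩, ⟨-1,0,0,1⟩, ⟨0,1,1,0⟩, ⟨0,-1,-1,0⟩]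

lemma Rclosed : ∀ x ∈ Rlist, ∀ y ∈ Rlist, mul2 x y ∈ Rlist := by decide
lemma Aclosed : ∀ x ∈ Alist, ∀ y ∈ Alist, mul2 x y ∈ Alist := by decide
lemma Rinv : ∀ x ∈ Rlist, ∃ y ∈ Rlist, mul2 y x = idM ∧ mul2 x y = idM := by decide
lemma Ainv : ∀ x ∈ Alist, ∃ y ∈ Alist, mul2 y x = idM ∧ mul2 x y = idM := by decide
lemma Rid : idM ∈ Rlist := by decide
lemma Aid : idM ∈ Alist := by decide
lemma Rnodup : Rlist.Nodup := by decide
lemma Anodup : Alist.Nodup := by decide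

/-! ### the pair set -/

def wOK (N : ℕ) (s t : ℤ) : Prop :=
  ∃ a : ℤ, 0 ≤ a ∧ a < N ∧ 0 ≤ a + s ∧ a + s < N ∧ 0 ≤ a + t ∧ a + t < N

def Pset (N : ℕ) : Set V :=
  {p | (p.1.1 ≠ 0 ∨ p.1.2 ≠ 0) ∧ (p.2.1 ≠ 0 ∨ p.2.2 ≠ 0) ∧
    (p.1.1 ≠ p.2.1 ∨ p.1.2 ≠ p.2.2) ∧ wOK N p.1.1 p.2.1 ∧ wOK N p.1.2 p.2.2}

lemma wOK_bounds {N : ℕ} {s t : ℤ} (h : wOK N s t) :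
    -(N:ℤ) ≤ s ∧ s ≤ N ∧ -(N:ℤ) ≤ t ∧ t ≤ N := by
  obtain ⟨a, h⟩ := h; omega

lemma Pset_bounds {N : ℕ} {p : V} (h : p ∈ Pset N) :
    (-(N:ℤ) ≤ p.1.1 ∧ p.1.1 ≤ N) ∧ (-(N:ℤ) ≤ p.1.2 ∧ p.1.2 ≤ N) ∧
    (-(N:ℤ) ≤ p.2.1 ∧ p.2.1 ≤ N) ∧ (-(N:ℤ) ≤ p.2.2 ∧ p.2.2 ≤ N) := by
  obtain ⟨_, _, _, h1, h2⟩ := h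
  have := wOK_bounds h1; have := wOK_bounds h2; tauto

lemma Pset_finite (N : ℕ) : (Pset N).Finite := by
  have : Pset N ⊆ (Set.Icc (-(N:ℤ)) N ×ˢ Set.Icc (-(N:ℤ)) N) ×ˢ
      (Set.Icc (-(N:ℤ)) N ×ˢ Set.Icc (-(N:ℤ)) N) := by
    intro p hp
    have := Pset_bounds hp
    constructor
    · constructor <;> simp_all [Set.mem_Icc]
    · constructor <;> simp_all [Set.mem_Icc]
  exact Set.Finite.subset (((Set.finite_Icc _ _).prod (Set.finite_Icc _ _)).prod
    ((Set.finite_Icc _ _).prod (Set.finite_Icc _ _))) this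

/-! ### invariance of `Pset` under the action -/

lemma act_oneA (A : M2) (p : V) : act idM A p = (aAct A p.1, aAct A p.2) := by
  obtain ⟨⟨u1,u2⟩,v1,v2⟩ := p
  simp only [act, aAct, idM, Prod.mk.injEq]
  refine ⟨⟨by ring, by ring⟩, by ring, by ring⟩

lemma PsetA (N : ℕ) : ∀ A ∈ Alist, ∀ p ∈ Pset N, act idM A p ∈ Pset N := by
  intro A hA p hp
  obtain ⟨⟨u1,u2⟩,v1,v2⟩ := p
  obtain ⟨h1, h2, h3, ⟨a,ha⟩, ⟨b,hb⟩⟩ := hp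
  rw [act_oneA]
  simp only [Alist, List.mem_cons] at hA
  rcases hA with rfl|rfl|rfl|rfl|rfl|rfl|rfl|rfl|h
  on_goal 9 => simp at h
  all_goals {
    refine ⟨?_, ?_, ?_, ?_, ?_⟩ <;>
    first
      | (simp only [aAct, idM] at *; omega)
      | (simp only [aAct, idM] at *;
         first
           | exact ⟨a, by omega⟩
           | exact ⟨b, by omega⟩
           | exact ⟨(N:ℤ) - 1 - a, by omega⟩
           | exact ⟨(N:ℤ) - 1 - b, by omega⟩) }

lemma PsetR (N : ℕ) : ∀ R ∈ Rlist, ∀ p ∈ Pset N, act R idM p ∈ Pset N := by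
  intro R hR p hp
  obtain ⟨⟨u1,u2⟩,v1,v2⟩ := p
  obtain ⟨h1, h2, h3, ⟨a,ha⟩, ⟨b,hb⟩⟩ := hp
  simp only [Rlist, List.mem_cons] at hR
  rcases hR with rfl|rfl|rfl|rfl|rfl|rfl|h
  on_goal 7 => simp at h
  all_goals {
    refine ⟨?_, ?_, ?_, ?_, ?_⟩ <;>
    first
      | (simp only [act, aAct, idM] at *; omega)
      | (simp only [act, aAct, idM] at *;
         first
           | exact ⟨a, by omega⟩
           | exact ⟨b, by omega⟩
           | exact ⟨a + u1, by omega⟩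
           | exact ⟨b + u2, by omega⟩
           | exact ⟨a + v1, by omega⟩
           | exact ⟨b + v2, by omega⟩) }

lemma PsetAct (N : ℕ) : ∀ R ∈ Rlist, ∀ A ∈ Alist, ∀ p ∈ Pset N, act R A p ∈ Pset N := by
  intro R hR A hA p hp
  have : act R A p = act R idM (act idM A p) := by
    rw [← act_mul]
    rw [(mul2_id R).1, (mul2_id A).2]
  rw [this]
  exact PsetR N R hR _ (PsetA N A hA p hp)

/-! ### congruence basics -/

lemma Cong.refl (S : Set Plane) : Cong S S := ⟨IsometryEquiv.refl _, Set.image_id' _⟩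

lemma Cong.symm {S T : Set Plane} (h : Cong S T) : Cong T S := by
  obtain ⟨f, hf⟩ := h
  refine ⟨f.symm, ?_⟩
  rw [← hf, ← Set.image_comp]
  simp

lemma Cong.trans {S T U : Set Plane} (h1 : Cong S T) (h2 : Cong T U) : Cong S U := by
  obtain ⟨f, hf⟩ := h1; obtain ⟨g, hg⟩ := h2
  exact ⟨f.trans g, by rw [← hg, ← hf, ← Set.image_comp]; rfl⟩

/-! ### points -/

lemma toPlane_apply (q : ℤ × ℤ) (i : Fin 2) :
    toPlane q i = if i = 0 then (q.1 : ℝ) else (q.2 : ℝ) := by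
  fin_cases i <;> simp [toPlane, pt]

lemma toPlane_add (q w : ℤ × ℤ) : toPlane (q + w) = toPlane q + toPlane w := by
  ext i
  fin_cases i <;>
    simp [toPlane, pt, Prod.fst_add, Prod.snd_add] <;> push_cast <;> ring

lemma toPlane_inj {q w : ℤ × ℤ} (h : toPlane q = toPlane w) : q = w := by
  have h1 := congrFun (congrArg (fun f : Plane => (f : Fin 2 → ℝ)) h) 0
  have h2 := congrFun (congrArg (fun f : Plane => (f : Fin 2 → ℝ)) h) 1
  simp only [toPlane, pt, WithLp.equiv_symm_apply, PiLp.toLp_apply, Matrix.cons_val_zero, Matrix.cons_val_one,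
    Matrix.head_cons] at h1 h2
  exact Prod.ext (by exact_mod_cast h1) (by exact_mod_cast h2)

/-- the triple of points attached to a pair of vectors -/
def tri (p : V) : Set Plane := {toPlane 0, toPlane p.1, toPlane p.2}

/-! ### translations -/

def transIso (w : ℤ × ℤ) : Plane ≃ᵢ Plane := IsometryEquiv.addRight (toPlane w)

lemma transIso_apply (w q : ℤ × ℤ) : transIso w (toPlane q) = toPlane (q + w) := by
  simp [transIso, toPlane_add]

lemma Cong_tri_translate (p : V) (w : ℤ × ℤ) :
    Cong (tri p) {toPlane (0 + w), toPlane (p.1 + w), toPlane (p.2 + w)} := by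
  refine ⟨transIso w, ?_⟩
  simp only [tri, Set.image_insert_eq, Set.image_singleton, transIso_apply]

/-- congruence between a grid triple and the triple of its difference vectors -/
lemma rep_exists {N : ℕ} {t : Set Plane} (ht : t ∈ gridTriples N) :
    ∃ p ∈ Pset N, Cong (tri p) t := by
  obtain ⟨a, b, c, ha, hb, hc, hab, hac, hbc, rfl⟩ := ht
  refine ⟨(b - a, c - a), ?_, ?_⟩
  · obtain ⟨ha1, ha2, ha3, ha4⟩ := ha
    obtain ⟨hb1, hb2, hb3, hb4⟩ := hb
    obtain ⟨hc1, hc2, hc3, hc4⟩ := hc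
    have hab' : a.1 ≠ b.1 ∨ a.2 ≠ b.2 := by
      by_contra h; push_neg at h; exact hab (Prod.ext h.1 h.2)
    have hac' : a.1 ≠ c.1 ∨ a.2 ≠ c.2 := by
      by_contra h; push_neg at h; exact hac (Prod.ext h.1 h.2)
    have hbc' : b.1 ≠ c.1 ∨ b.2 ≠ c.2 := by
      by_contra h; push_neg at h; exact hbc (Prod.ext h.1 h.2)
    refine ⟨?_, ?_, ?_, ⟨a.1, ?_⟩, ⟨a.2, ?_⟩⟩ <;>
      simp only [Prod.fst_sub, Prod.snd_sub] <;> omega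
  · have := Cong_tri_translate ((b - a, c - a)) a
    simpa using this

/-! ### the linear isometries -/

def orthIso (A : M2) (h1 : (A.a:ℝ)^2 + (A.c:ℝ)^2 = 1) (h2 : (A.b:ℝ)^2 + (A.d:ℝ)^2 = 1)
    (h3 : (A.a:ℝ)*(A.b:ℝ) + (A.c:ℝ)*(A.d:ℝ) = 0) (h4 : (A.a:ℝ)^2 + (A.b:ℝ)^2 = 1)
    (h5 : (A.c:ℝ)^2 + (A.d:ℝ)^2 = 1) (h6 : (A.a:ℝ)*(A.c:ℝ) + (A.b:ℝ)*(A.d:ℝ) = 0) :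
    Plane ≃ᵢ Plane where
  toFun x := pt (A.a * x 0 + A.b * x 1) (A.c * x 0 + A.d * x 1)
  invFun x := pt (A.a * x 0 + A.c * x 1) (A.b * x 0 + A.d * x 1)
  left_inv x := by
    ext i
    fin_cases i <;>
      simp only [pt, WithLp.equiv_symm_apply, PiLp.toLp_apply, Matrix.cons_val_zero, Matrix.cons_val_one,
        Matrix.head_cons, Fin.isValue, Fin.zero_eta, Fin.mk_one]
    · linear_combination (x 0) * h1 + (x 1) * h3
    · linear_combination (x 0) * h3 + (x 1) * h2
  right_inv x := by
    ext i
    fin_cases i <;>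
      simp only [pt, WithLp.equiv_symm_apply, PiLp.toLp_apply, Matrix.cons_val_zero, Matrix.cons_val_one,
        Matrix.head_cons, Fin.isValue, Fin.zero_eta, Fin.mk_one]
    · linear_combination (x 0) * h4 + (x 1) * h6
    · linear_combination (x 0) * h6 + (x 1) * h5
  isometry_toFun := by
    intro x y
    rw [edist_dist, edist_dist]
    congr 1
    rw [EuclideanSpace.dist_eq, EuclideanSpace.dist_eq]
    congr 1
    rw [Fin.sum_univ_two, Fin.sum_univ_two]
    simp only [pt, WithLp.equiv_symm_apply, PiLp.toLp_apply, Matrix.cons_val_zero, Matrix.cons_val_one,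
      Matrix.head_cons, Real.dist_eq]
    simp only [sq_abs]
    linear_combination (x 0 - y 0)^2 * h1 + (x 1 - y 1)^2 * h2 +
      (2*(x 0 - y 0)*(x 1 - y 1)) * h3

/-! ### the action preserves congruence class -/

lemma pt_zero (i : Fin 2) : toPlane 0 i = 0 := by
  fin_cases i <;> simp [toPlane, pt]

lemma orthIso_toPlane (A : M2) (h1 : (A.a:ℝ)^2 + (A.c:ℝ)^2 = 1) (h2 : (A.b:ℝ)^2 + (A.d:ℝ)^2 = 1)
    (h3 : (A.a:ℝ)*(A.b:ℝ) + (A.c:ℝ)*(A.d:ℝ) = 0) (h4 : (A.a:ℝ)^2 + (A.b:ℝ)^2 = 1)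
    (h5 : (A.c:ℝ)^2 + (A.d:ℝ)^2 = 1) (h6 : (A.a:ℝ)*(A.c:ℝ) + (A.b:ℝ)*(A.d:ℝ) = 0) (q : ℤ × ℤ) :
    orthIso A h1 h2 h3 h4 h5 h6 (toPlane q) = toPlane (aAct A q) := by
  ext i
  fin_cases i <;>
    simp [orthIso, toPlane, pt, aAct, IsometryEquiv.coe_mk, Equiv.coe_fn_mk] <;>
    push_cast <;> ring

lemma cong_tri_orth (A : M2) (h1 : (A.a:ℝ)^2 + (A.c:ℝ)^2 = 1) (h2 : (A.b:ℝ)^2 + (A.d:ℝ)^2 = 1)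
    (h3 : (A.a:ℝ)*(A.b:ℝ) + (A.c:ℝ)*(A.d:ℝ) = 0) (h4 : (A.a:ℝ)^2 + (A.b:ℝ)^2 = 1)
    (h5 : (A.c:ℝ)^2 + (A.d:ℝ)^2 = 1) (h6 : (A.a:ℝ)*(A.c:ℝ) + (A.b:ℝ)*(A.d:ℝ) = 0) (p : V) :
    Cong (tri p) (tri (aAct A p.1, aAct A p.2)) := by
  refine ⟨orthIso A h1 h2 h3 h4 h5 h6, ?_⟩
  have h0 : aAct A 0 = 0 := by simp [aAct]
  simp only [tri, Set.image_insert_eq, Set.image_singleton, orthIso_toPlane, h0]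

lemma CongA : ∀ A ∈ Alist, ∀ p : V, Cong (tri p) (tri (act idM A p)) := by
  intro A hA p
  rw [act_oneA]
  simp only [Alist, List.mem_cons] at hA
  rcases hA with rfl|rfl|rfl|rfl|rfl|rfl|rfl|rfl|h
  on_goal 9 => simp at h
  all_goals refine cong_tri_orth _ ?_ ?_ ?_ ?_ ?_ ?_ p <;> norm_num

lemma cong_tri_of_translate (p q : V) (w : ℤ × ℤ)
    (h : ({toPlane (0 + w), toPlane (p.1 + w), toPlane (p.2 + w)} : Set Plane) = tri q) :
    Cong (tri p) (tri q) := h ▸ Cong_tri_translate p w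

lemma set3_rot (a b c : Plane) : ({a, b, c} : Set Plane) = {c, a, b} := by
  ext x; simp only [Set.mem_insert_iff, Set.mem_singleton_iff]; tauto

lemma set3_swap12 (a b c : Plane) : ({a, b, c} : Set Plane) = {b, a, c} :=
  Set.insert_comm a b {c}

lemma set3_swap23 (a b c : Plane) : ({a, b, c} : Set Plane) = {a, c, b} := by
  ext x; simp only [Set.mem_insert_iff, Set.mem_singleton_iff]; tauto

lemma set3_rot2 (a b c : Plane) : ({a, b, c} : Set Plane) = {b, c, a} := by
  ext x; simp only [Set.mem_insert_iff, Set.mem_singleton_iff]; tauto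

lemma CongR : ∀ R ∈ Rlist, ∀ p : V, Cong (tri p) (tri (act R idM p)) := by
  intro R hR p
  obtain ⟨⟨u1,u2⟩,v1,v2⟩ := p
  simp only [Rlist, List.mem_cons] at hR
  rcases hR with rfl|rfl|rfl|rfl|rfl|rfl|h
  · rw [show (⟨1,0,0,1⟩ : M2) = idM from rfl, act_id]
    exact Cong.refl _
  · have hact : act ⟨0,1,1,0⟩ idM ((u1,u2),(v1,v2)) = ((v1,v2),(u1,u2)) := by
      simp only [act, aAct, idM, Prod.mk.injEq]
      refine ⟨⟨by ring, by ring⟩, by ring, by ring⟩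
    rw [hact]
    have : tri ((v1,v2),(u1,u2)) = tri ((u1,u2),(v1,v2)) := set3_swap23 _ _ _
    rw [this]
    exact Cong.refl _
  · -- (u,v) ↦ (-u, v-u)
    have hact : act ⟨-1,0,-1,1⟩ idM ((u1,u2),(v1,v2)) = ((-u1,-u2),(v1-u1,v2-u2)) := by
      simp only [act, aAct, idM, Prod.mk.injEq]
      refine ⟨⟨by ring, by ring⟩, by ring, by ring⟩
    rw [hact]
    refine cong_tri_of_translate _ _ (-u1,-u2) ?_
    have e1 : ((0:ℤ×ℤ) + (-u1,-u2)) = ((-u1,-u2) : ℤ×ℤ) := by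
      simp [Prod.ext_iff]
    have e2 : (((u1,u2):ℤ×ℤ) + (-u1,-u2)) = (0 : ℤ×ℤ) := by
      simp [Prod.ext_iff]
    have e3 : (((v1,v2):ℤ×ℤ) + (-u1,-u2)) = ((v1-u1,v2-u2) : ℤ×ℤ) := by
      simp [Prod.ext_iff]; constructor <;> ring
    rw [e1, e2, e3]
    exact set3_swap12 _ _ _
  · -- (u,v) ↦ (v-u, -u)
    have hact : act ⟨-1,1,-1,0⟩ idM ((u1,u2),(v1,v2)) = ((v1-u1,v2-u2),(-u1,-u2)) := by
      simp only [act, aAct, idM, Prod.mk.injEq]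
      refine ⟨⟨by ring, by ring⟩, by ring, by ring⟩
    rw [hact]
    refine cong_tri_of_translate _ _ (-u1,-u2) ?_
    have e1 : ((0:ℤ×ℤ) + (-u1,-u2)) = ((-u1,-u2) : ℤ×ℤ) := by
      simp [Prod.ext_iff]
    have e2 : (((u1,u2):ℤ×ℤ) + (-u1,-u2)) = (0 : ℤ×ℤ) := by
      simp [Prod.ext_iff]
    have e3 : (((v1,v2):ℤ×ℤ) + (-u1,-u2)) = ((v1-u1,v2-u2) : ℤ×ℤ) := by
      simp [Prod.ext_iff]; constructor <;> ring
    rw [e1, e2, e3]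
    exact set3_rot2 _ _ _
  · -- (u,v) ↦ (-v, u-v)
    have hact : act ⟨0,-1,1,-1⟩ idM ((u1,u2),(v1,v2)) = ((-v1,-v2),(u1-v1,u2-v2)) := by
      simp only [act, aAct, idM, Prod.mk.injEq]
      refine ⟨⟨by ring, by ring⟩, by ring, by ring⟩
    rw [hact]
    refine cong_tri_of_translate _ _ (-v1,-v2) ?_
    have e1 : ((0:ℤ×ℤ) + (-v1,-v2)) = ((-v1,-v2) : ℤ×ℤ) := by
      simp [Prod.ext_iff]
    have e2 : (((u1,u2):ℤ×ℤ) + (-v1,-v2)) = ((u1-v1,u2-v2) : ℤ×ℤ) := by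
      simp [Prod.ext_iff]; constructor <;> ring
    have e3 : (((v1,v2):ℤ×ℤ) + (-v1,-v2)) = (0 : ℤ×ℤ) := by
      simp [Prod.ext_iff]
    rw [e1, e2, e3]
    exact set3_rot _ _ _
  · -- (u,v) ↦ (u-v, -v)
    have hact : act ⟨1,-1,0,-1⟩ idM ((u1,u2),(v1,v2)) = ((u1-v1,u2-v2),(-v1,-v2)) := by
      simp only [act, aAct, idM, Prod.mk.injEq]
      refine ⟨⟨by ring, by ring⟩, by ring, by ring⟩
    rw [hact]
    refine cong_tri_of_translate _ _ (-v1,-v2) ?_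
    have e1 : ((0:ℤ×ℤ) + (-v1,-v2)) = ((-v1,-v2) : ℤ×ℤ) := by
      simp [Prod.ext_iff]
    have e2 : (((u1,u2):ℤ×ℤ) + (-v1,-v2)) = ((u1-v1,u2-v2) : ℤ×ℤ) := by
      simp [Prod.ext_iff]; constructor <;> ring
    have e3 : (((v1,v2):ℤ×ℤ) + (-v1,-v2)) = (0 : ℤ×ℤ) := by
      simp [Prod.ext_iff]
    rw [e1, e2, e3]
    ext x; simp only [tri, Set.mem_insert_iff, Set.mem_singleton_iff]; tauto
  · simp at h

lemma CongAct : ∀ R ∈ Rlist, ∀ A ∈ Alist, ∀ p : V, Cong (tri p) (tri (act R A p)) := by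
  intro R hR A hA p
  have : act R A p = act R idM (act idM A p) := by
    rw [← act_mul, (mul2_id R).1, (mul2_id A).2]
  rw [this]
  exact (CongA A hA p).trans (CongR R hR _)

/-! ### canonical representatives -/

abbrev W := ℤ ×ₗ (ℤ ×ₗ (ℤ ×ₗ ℤ))

def eV : V ≃ W where
  toFun p := toLex (p.1.1, toLex (p.1.2, toLex (p.2.1, p.2.2)))
  invFun w := (((ofLex w).1, (ofLex (ofLex w).2).1),
    ((ofLex (ofLex (ofLex w).2).2).1, (ofLex (ofLex (ofLex w).2).2).2))
  left_inv p := rfl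
  right_inv w := rfl

def Rc (N : ℕ) (c : Set (Set Plane)) : Set V :=
  {p | p ∈ Pset N ∧ ∃ t ∈ c, Cong (tri p) t}

lemma Rc_sub (N : ℕ) (c : Set (Set Plane)) : Rc N c ⊆ Pset N := fun _ h => h.1

lemma Rc_finite (N : ℕ) (c : Set (Set Plane)) : (Rc N c).Finite :=
  (Pset_finite N).subset (Rc_sub N c)

open scoped Classical in
def phi (N : ℕ) (c : Set (Set Plane)) : V :=
  if h : (Rc N c).Nonempty then
    eV.symm (((Rc_finite N c).toFinset.image eV).min'
      (Finset.image_nonempty.mpr ((Rc_finite N c).toFinset_nonempty.mpr h)))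
  else 0

lemma phi_spec {N : ℕ} {c : Set (Set Plane)} (h : (Rc N c).Nonempty) :
    phi N c ∈ Rc N c ∧ ∀ q ∈ Rc N c, eV (phi N c) ≤ eV q := by
  classical
  rw [phi, dif_pos h]
  constructor
  · have hmem := Finset.min'_mem ((Rc_finite N c).toFinset.image eV)
      (Finset.image_nonempty.mpr ((Rc_finite N c).toFinset_nonempty.mpr h))
    rw [Finset.mem_image] at hmem
    obtain ⟨q, hq, hq2⟩ := hmem
    rw [Set.Finite.mem_toFinset] at hq
    rw [← hq2, Equiv.symm_apply_apply]
    exact hq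
  · intro q' hq'
    rw [Equiv.apply_symm_apply]
    exact Finset.min'_le _ (eV q')
      (Finset.mem_image.mpr ⟨q', (Set.Finite.mem_toFinset _).mpr hq', rfl⟩)

lemma Rc_act {N : ℕ} {c : Set (Set Plane)} {p : V} (hp : p ∈ Rc N c)
    {R A : M2} (hR : R ∈ Rlist) (hA : A ∈ Alist) : act R A p ∈ Rc N c := by
  obtain ⟨hpP, t, htc, hcong⟩ := hp
  exact ⟨PsetAct N R hR A hA p hpP, t, htc, ((CongAct R hR A hA p).symm).trans hcong⟩

def Mins (N : ℕ) : Set V :=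
  {p | p ∈ Pset N ∧ ∀ R ∈ Rlist, ∀ A ∈ Alist, eV p ≤ eV (act R A p)}

lemma phi_mem_Mins {N : ℕ} {c : Set (Set Plane)} (h : (Rc N c).Nonempty) :
    phi N c ∈ Mins N := by
  obtain ⟨hmem, hmin⟩ := phi_spec h
  exact ⟨hmem.1, fun R hR A hA => hmin _ (Rc_act hmem hR hA)⟩

/-! ### the class map -/

lemma Rc_nonempty {N : ℕ} {t : Set Plane} (ht : t ∈ gridTriples N) :
    (Rc N ({t' | t' ∈ gridTriples N ∧ Cong t t'})).Nonempty := by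
  obtain ⟨p, hpP, hcong⟩ := rep_exists ht
  exact ⟨p, hpP, t, ⟨ht, Cong.refl t⟩, hcong⟩

lemma class_eq_of_cong {N : ℕ} {t t' : Set Plane} (h : Cong t t') :
    {s | s ∈ gridTriples N ∧ Cong t s} = {s | s ∈ gridTriples N ∧ Cong t' s} := by
  ext s
  exact ⟨fun ⟨h1, h2⟩ => ⟨h1, h.symm.trans h2⟩, fun ⟨h1, h2⟩ => ⟨h1, h.trans h2⟩⟩

lemma T_le_Mins (N : ℕ) : T N ≤ (Mins N).ncard := by
  rw [T]
  refine Set.ncard_le_ncard_of_injOn (phi N) ?_ ?_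
    ((Pset_finite N).subset (fun p hp => hp.1))
  · rintro c ⟨t, ht, rfl⟩
    exact phi_mem_Mins (Rc_nonempty ht)
  · rintro c ⟨t, ht, rfl⟩ c' ⟨t', ht', rfl⟩ heq
    dsimp only at heq ⊢
    have h1 := phi_spec (Rc_nonempty ht)
    have h2 := phi_spec (Rc_nonempty ht')
    obtain ⟨⟨_, s, ⟨hs1, hs2⟩, hs3⟩, _⟩ := h1
    obtain ⟨⟨_, s', ⟨hs1', hs2'⟩, hs3'⟩, _⟩ := h2
    have : Cong t t' := by
      have := hs2.trans hs3.symm  -- Cong t (tri (phi N c))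
      rw [heq] at this
      exact this.trans (hs2'.trans hs3'.symm).symm
    exact class_eq_of_cong this

/-! ### fixed point sets -/

def FixP (N : ℕ) (R A : M2) : Set V := {p | p ∈ Pset N ∧ act R A p = p}

lemma FixP_finite (N : ℕ) (R A : M2) : (FixP N R A).Finite :=
  (Pset_finite N).subset (fun _ h => h.1)

def BigFix (N : ℕ) : Set V :=
  {p | p ∈ Pset N ∧ ∃ R ∈ Rlist, ∃ A ∈ Alist, ¬(R = idM ∧ A = idM) ∧ act R A p = p}

def MinsFree (N : ℕ) : Set V := Mins N \ BigFix N

lemma Mins_finite (N : ℕ) : (Mins N).Finite := (Pset_finite N).subset (fun _ h => h.1)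
lemma BigFix_finite (N : ℕ) : (BigFix N).Finite := (Pset_finite N).subset (fun _ h => h.1)
lemma MinsFree_finite (N : ℕ) : (MinsFree N).Finite := (Mins_finite N).subset Set.diff_subset

lemma Mins_split (N : ℕ) :
    (Mins N).ncard ≤ (MinsFree N).ncard + (BigFix N).ncard := by
  have hsub : Mins N ⊆ MinsFree N ∪ BigFix N := by
    intro p hp
    by_cases h : p ∈ BigFix N
    · exact Or.inr h
    · exact Or.inl ⟨hp, h⟩
  calc (Mins N).ncard ≤ (MinsFree N ∪ BigFix N).ncard :=
        Set.ncard_le_ncard hsub ((MinsFree_finite N).union (BigFix_finite N))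
    _ ≤ (MinsFree N).ncard + (BigFix N).ncard := Set.ncard_union_le _ _

/-! ### a generic coordinate-injection bound -/

lemma card_le_of_coords (N : ℕ) (S : Set V) (hS : S ⊆ Pset N) (f : V → ℤ × ℤ)
    (hb : ∀ p ∈ Pset N, -(N:ℤ) ≤ (f p).1 ∧ (f p).1 ≤ N ∧ -(N:ℤ) ≤ (f p).2 ∧ (f p).2 ≤ N)
    (hinj : Set.InjOn f S) : S.ncard ≤ (2*N+1)^2 := by
  have htgt : ((Finset.Icc (-(N:ℤ)) N ×ˢ Finset.Icc (-(N:ℤ)) N : Finset (ℤ×ℤ)) : Set (ℤ×ℤ)).ncard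
      = (2*N+1)^2 := by
    rw [Set.ncard_coe_finset, Finset.card_product, Int.card_Icc]
    have : ((N:ℤ) + 1 - -(N:ℤ)).toNat = 2*N+1 := by omega
    rw [this]; ring
  rw [← htgt]
  refine Set.ncard_le_ncard_of_injOn f ?_ hinj (Finset.finite_toSet _)
  intro p hp
  have := hb p (hS hp)
  simp only [Finset.coe_product, Set.mem_prod, Finset.mem_coe, Finset.mem_Icc]
  constructor <;> omega

/-! ### counting the free part -/

def Gfin : Finset (M2 × M2) := (Rlist.product Alist).toFinset

lemma Gfin_card : Gfin.card = 48 := by decide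

lemma Gfin_mem {g : M2 × M2} (h : g ∈ Gfin) : g.1 ∈ Rlist ∧ g.2 ∈ Alist := by
  obtain ⟨r, a⟩ := g
  rw [Gfin, List.mem_toFinset] at h
  exact List.pair_mem_product.mp h

lemma eV_inj : Function.Injective eV := eV.injective

lemma free_bound (N : ℕ) : 48 * (MinsFree N).ncard ≤ (Pset N).ncard := by
  classical
  haveI : Finite ↥(Pset N) := (Pset_finite N).to_subtype
  have key : ∀ (x : ↥(MinsFree N) × ↥Gfin), act x.2.1.1 x.2.1.2 x.1.1 ∈ Pset N := by
    rintro ⟨⟨p, hp⟩, ⟨g, hg⟩⟩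
    obtain ⟨hR, hA⟩ := Gfin_mem hg
    exact PsetAct N _ hR _ hA p hp.1.1
  set F : ↥(MinsFree N) × ↥Gfin → ↥(Pset N) :=
    fun x => ⟨act x.2.1.1 x.2.1.2 x.1.1, key x⟩ with hFdef
  have hinj : Function.Injective F := by
    rintro ⟨⟨p, hp⟩, ⟨⟨R, A⟩, hg⟩⟩ ⟨⟨p', hp'⟩, ⟨⟨R', A'⟩, hg'⟩⟩ heq
    obtain ⟨hR, hA⟩ := Gfin_mem hg
    obtain ⟨hR', hA'⟩ := Gfin_mem hg'
    have heq' : act R A p = act R' A' p' := congrArg Subtype.val heq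
    obtain ⟨S, hS, hSR, hRS⟩ := Rinv R hR
    obtain ⟨B, hB, hBA, hAB⟩ := Ainv A hA
    obtain ⟨S', hS', hSR', hRS'⟩ := Rinv R' hR'
    obtain ⟨B', hB', hBA', hAB'⟩ := Ainv A' hA'
    -- p = act (mul2 S' R) (mul2 B' A) p' ∘ ... first: act S' B' both sides
    have e1 : act (mul2 S' R) (mul2 B' A) p = act (mul2 S' R') (mul2 B' A') p' := by
      rw [act_mul, act_mul, heq']
    rw [hSR', hBA', act_id] at e1
    have e2 : act (mul2 S R') (mul2 B A') p' = act (mul2 S R) (mul2 B A) p := by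
      rw [act_mul, act_mul, heq']
    rw [hSR, hBA, act_id] at e2
    -- p and p' in each other's orbits
    have hle1 : eV p ≤ eV p' := by
      rw [← e1]
      exact hp.1.2 _ (Rclosed _ hS' _ hR) _ (Aclosed _ hB' _ hA)
    have hle2 : eV p' ≤ eV p := by
      rw [← e2]
      exact hp'.1.2 _ (Rclosed _ hS _ hR') _ (Aclosed _ hB _ hA')
    have hpp : p = p' := eV_inj (le_antisymm hle1 hle2)
    subst hpp
    -- now act R A p = act R' A' p; derive stabilizer element
    have e3 : act (mul2 S' R) (mul2 B' A) p = p := e1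
    have hid : mul2 S' R = idM ∧ mul2 B' A = idM := by
      by_contra hcon
      exact (hp.2 ⟨hp.1.1, mul2 S' R, Rclosed _ hS' _ hR, mul2 B' A,
        Aclosed _ hB' _ hA, hcon, e3⟩)
    -- conclude R = R', A = A'
    have hRR : R = R' := by
      have h1 : mul2 R' (mul2 S' R) = mul2 R' idM := by rw [hid.1]
      rwa [← mul2_assoc, hRS', (mul2_id R').1, (mul2_id R).2] at h1
    have hAA : A = A' := by
      have h1 : mul2 A' (mul2 B' A) = mul2 A' idM := by rw [hid.2]
      rwa [← mul2_assoc, hAB', (mul2_id A').1, (mul2_id A).2] at h1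
    subst hRR; subst hAA
    rfl
  have hcard := Nat.card_le_card_of_injective F hinj
  rw [Nat.card_prod, Nat.card_coe_set_eq, Nat.card_coe_set_eq] at hcard
  have hG : Nat.card ↥Gfin = 48 := by
    rw [Nat.card_eq_finsetCard, Gfin_card]
  rw [hG] at hcard
  calc 48 * (MinsFree N).ncard = (MinsFree N).ncard * 48 := by ring
    _ ≤ (Pset N).ncard := hcard

/-! ### bounding each fixed point set -/

lemma FixP_bound (N : ℕ) : ∀ R ∈ Rlist, ∀ A ∈ Alist, ¬(R = idM ∧ A = idM) →
    (FixP N R A).ncard ≤ (2*N+1)^2 := by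
  intro R hR A hA hne
  simp only [Rlist, List.mem_cons, List.not_mem_nil, or_false] at hR
  simp only [Alist, List.mem_cons, List.not_mem_nil, or_false] at hA
  rcases hR with rfl|rfl|rfl|rfl|rfl|rfl <;>
    rcases hA with rfl|rfl|rfl|rfl|rfl|rfl|rfl|rfl
  · exact absurd ⟨rfl, rfl⟩ hne
  · have hemp : FixP N (⟨1,0,0,1⟩ : M2) (⟨0,-1,1,0⟩ : M2) = ∅ := by
      ext ⟨⟨u1,u2⟩,v1,v2⟩
      simp only [FixP, Set.mem_setOf_eq, Set.mem_empty_iff_false, iff_false]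
      rintro ⟨⟨h1, h2, h3, -, -⟩, heq⟩
      simp only [act, aAct, Prod.mk.injEq] at heq
      simp only [Prod.mk.injEq] at h1 h2 h3
      omega
    rw [hemp]
    simp
  · have hemp : FixP N (⟨1,0,0,1⟩ : M2) (⟨-1,0,0,-1⟩ : M2) = ∅ := by
      ext ⟨⟨u1,u2⟩,v1,v2⟩
      simp only [FixP, Set.mem_setOf_eq, Set.mem_empty_iff_false, iff_false]
      rintro ⟨⟨h1, h2, h3, -, -⟩, heq⟩
      simp only [act, aAct, Prod.mk.injEq] at heq
      simp only [Prod.mk.injEq] at h1 h2 h3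
      omega
    rw [hemp]
    simp
  · have hemp : FixP N (⟨1,0,0,1⟩ : M2) (⟨0,1,-1,0⟩ : M2) = ∅ := by
      ext ⟨⟨u1,u2⟩,v1,v2⟩
      simp only [FixP, Set.mem_setOf_eq, Set.mem_empty_iff_false, iff_false]
      rintro ⟨⟨h1, h2, h3, -, -⟩, heq⟩
      simp only [act, aAct, Prod.mk.injEq] at heq
      simp only [Prod.mk.injEq] at h1 h2 h3
      omega
    rw [hemp]
    simp
  · refine card_le_of_coords N _ (fun p hp => hp.1) (fun p => (p.1.1, p.2.1))
      (fun p hp => by have := Pset_bounds hp; tauto) ?_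
    rintro ⟨⟨u1,u2⟩,v1,v2⟩ ⟨-, heq⟩ ⟨⟨a1,a2⟩,b1,b2⟩ ⟨-, heq'⟩ hfe
    simp only [act, aAct, Prod.mk.injEq] at heq heq'
    simp only [Prod.mk.injEq] at hfe ⊢
    omega
  · refine card_le_of_coords N _ (fun p hp => hp.1) (fun p => (p.1.2, p.2.2))
      (fun p hp => by have := Pset_bounds hp; tauto) ?_
    rintro ⟨⟨u1,u2⟩,v1,v2⟩ ⟨-, heq⟩ ⟨⟨a1,a2⟩,b1,b2⟩ ⟨-, heq'⟩ hfe
    simp only [act, aAct, Prod.mk.injEq] at heq heq'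
    simp only [Prod.mk.injEq] at hfe ⊢
    omega
  · refine card_le_of_coords N _ (fun p hp => hp.1) (fun p => (p.1.1, p.2.1))
      (fun p hp => by have := Pset_bounds hp; tauto) ?_
    rintro ⟨⟨u1,u2⟩,v1,v2⟩ ⟨-, heq⟩ ⟨⟨a1,a2⟩,b1,b2⟩ ⟨-, heq'⟩ hfe
    simp only [act, aAct, Prod.mk.injEq] at heq heq'
    simp only [Prod.mk.injEq] at hfe ⊢
    omega
  · refine card_le_of_coords N _ (fun p hp => hp.1) (fun p => (p.1.1, p.2.1))
      (fun p hp => by have := Pset_bounds hp; tauto) ?_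
    rintro ⟨⟨u1,u2⟩,v1,v2⟩ ⟨-, heq⟩ ⟨⟨a1,a2⟩,b1,b2⟩ ⟨-, heq'⟩ hfe
    simp only [act, aAct, Prod.mk.injEq] at heq heq'
    simp only [Prod.mk.injEq] at hfe ⊢
    omega
  · have hemp : FixP N (⟨0,1,1,0⟩ : M2) (⟨1,0,0,1⟩ : M2) = ∅ := by
      ext ⟨⟨u1,u2⟩,v1,v2⟩
      simp only [FixP, Set.mem_setOf_eq, Set.mem_empty_iff_false, iff_false]
      rintro ⟨⟨h1, h2, h3, -, -⟩, heq⟩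
      simp only [act, aAct, Prod.mk.injEq] at heq
      simp only [Prod.mk.injEq] at h1 h2 h3
      omega
    rw [hemp]
    simp
  · have hemp : FixP N (⟨0,1,1,0⟩ : M2) (⟨0,-1,1,0⟩ : M2) = ∅ := by
      ext ⟨⟨u1,u2⟩,v1,v2⟩
      simp only [FixP, Set.mem_setOf_eq, Set.mem_empty_iff_false, iff_false]
      rintro ⟨⟨h1, h2, h3, -, -⟩, heq⟩
      simp only [act, aAct, Prod.mk.injEq] at heq
      simp only [Prod.mk.injEq] at h1 h2 h3
      omega
    rw [hemp]
    simp
  · refine card_le_of_coords N _ (fun p hp => hp.1) (fun p => (p.1.1, p.1.2))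
      (fun p hp => by have := Pset_bounds hp; tauto) ?_
    rintro ⟨⟨u1,u2⟩,v1,v2⟩ ⟨-, heq⟩ ⟨⟨a1,a2⟩,b1,b2⟩ ⟨-, heq'⟩ hfe
    simp only [act, aAct, Prod.mk.injEq] at heq heq'
    simp only [Prod.mk.injEq] at hfe ⊢
    omega
  · have hemp : FixP N (⟨0,1,1,0⟩ : M2) (⟨0,1,-1,0⟩ : M2) = ∅ := by
      ext ⟨⟨u1,u2⟩,v1,v2⟩
      simp only [FixP, Set.mem_setOf_eq, Set.mem_empty_iff_false, iff_false]
      rintro ⟨⟨h1, h2, h3, -, -⟩, heq⟩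
      simp only [act, aAct, Prod.mk.injEq] at heq
      simp only [Prod.mk.injEq] at h1 h2 h3
      omega
    rw [hemp]
    simp
  · refine card_le_of_coords N _ (fun p hp => hp.1) (fun p => (p.1.1, p.1.2))
      (fun p hp => by have := Pset_bounds hp; tauto) ?_
    rintro ⟨⟨u1,u2⟩,v1,v2⟩ ⟨-, heq⟩ ⟨⟨a1,a2⟩,b1,b2⟩ ⟨-, heq'⟩ hfe
    simp only [act, aAct, Prod.mk.injEq] at heq heq'
    simp only [Prod.mk.injEq] at hfe ⊢
    omega
  · refine card_le_of_coords N _ (fun p hp => hp.1) (fun p => (p.1.1, p.1.2))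
      (fun p hp => by have := Pset_bounds hp; tauto) ?_
    rintro ⟨⟨u1,u2⟩,v1,v2⟩ ⟨-, heq⟩ ⟨⟨a1,a2⟩,b1,b2⟩ ⟨-, heq'⟩ hfe
    simp only [act, aAct, Prod.mk.injEq] at heq heq'
    simp only [Prod.mk.injEq] at hfe ⊢
    omega
  · refine card_le_of_coords N _ (fun p hp => hp.1) (fun p => (p.1.1, p.1.2))
      (fun p hp => by have := Pset_bounds hp; tauto) ?_
    rintro ⟨⟨u1,u2⟩,v1,v2⟩ ⟨-, heq⟩ ⟨⟨a1,a2⟩,b1,b2⟩ ⟨-, heq'⟩ hfe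
    simp only [act, aAct, Prod.mk.injEq] at heq heq'
    simp only [Prod.mk.injEq] at hfe ⊢
    omega
  · refine card_le_of_coords N _ (fun p hp => hp.1) (fun p => (p.1.1, p.1.2))
      (fun p hp => by have := Pset_bounds hp; tauto) ?_
    rintro ⟨⟨u1,u2⟩,v1,v2⟩ ⟨-, heq⟩ ⟨⟨a1,a2⟩,b1,b2⟩ ⟨-, heq'⟩ hfe
    simp only [act, aAct, Prod.mk.injEq] at heq heq'
    simp only [Prod.mk.injEq] at hfe ⊢
    omega
  · have hemp : FixP N (⟨-1,0,-1,1⟩ : M2) (⟨1,0,0,1⟩ : M2) = ∅ := by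
      ext ⟨⟨u1,u2⟩,v1,v2⟩
      simp only [FixP, Set.mem_setOf_eq, Set.mem_empty_iff_false, iff_false]
      rintro ⟨⟨h1, h2, h3, -, -⟩, heq⟩
      simp only [act, aAct, Prod.mk.injEq] at heq
      simp only [Prod.mk.injEq] at h1 h2 h3
      omega
    rw [hemp]
    simp
  · have hemp : FixP N (⟨-1,0,-1,1⟩ : M2) (⟨0,-1,1,0⟩ : M2) = ∅ := by
      ext ⟨⟨u1,u2⟩,v1,v2⟩
      simp only [FixP, Set.mem_setOf_eq, Set.mem_empty_iff_false, iff_false]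
      rintro ⟨⟨h1, h2, h3, -, -⟩, heq⟩
      simp only [act, aAct, Prod.mk.injEq] at heq
      simp only [Prod.mk.injEq] at h1 h2 h3
      omega
    rw [hemp]
    simp
  · refine card_le_of_coords N _ (fun p hp => hp.1) (fun p => (p.1.1, p.1.2))
      (fun p hp => by have := Pset_bounds hp; tauto) ?_
    rintro ⟨⟨u1,u2⟩,v1,v2⟩ ⟨-, heq⟩ ⟨⟨a1,a2⟩,b1,b2⟩ ⟨-, heq'⟩ hfe
    simp only [act, aAct, Prod.mk.injEq] at heq heq'
    simp only [Prod.mk.injEq] at hfe ⊢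
    omega
  · have hemp : FixP N (⟨-1,0,-1,1⟩ : M2) (⟨0,1,-1,0⟩ : M2) = ∅ := by
      ext ⟨⟨u1,u2⟩,v1,v2⟩
      simp only [FixP, Set.mem_setOf_eq, Set.mem_empty_iff_false, iff_false]
      rintro ⟨⟨h1, h2, h3, -, -⟩, heq⟩
      simp only [act, aAct, Prod.mk.injEq] at heq
      simp only [Prod.mk.injEq] at h1 h2 h3
      omega
    rw [hemp]
    simp
  · refine card_le_of_coords N _ (fun p hp => hp.1) (fun p => (p.1.2, p.2.1))
      (fun p hp => by have := Pset_bounds hp; tauto) ?_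
    rintro ⟨⟨u1,u2⟩,v1,v2⟩ ⟨-, heq⟩ ⟨⟨a1,a2⟩,b1,b2⟩ ⟨-, heq'⟩ hfe
    simp only [act, aAct, Prod.mk.injEq] at heq heq'
    simp only [Prod.mk.injEq] at hfe ⊢
    omega
  · refine card_le_of_coords N _ (fun p hp => hp.1) (fun p => (p.1.1, p.2.2))
      (fun p hp => by have := Pset_bounds hp; tauto) ?_
    rintro ⟨⟨u1,u2⟩,v1,v2⟩ ⟨-, heq⟩ ⟨⟨a1,a2⟩,b1,b2⟩ ⟨-, heq'⟩ hfe
    simp only [act, aAct, Prod.mk.injEq] at heq heq'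
    simp only [Prod.mk.injEq] at hfe ⊢
    omega
  · refine card_le_of_coords N _ (fun p hp => hp.1) (fun p => (p.1.1, p.2.1))
      (fun p hp => by have := Pset_bounds hp; tauto) ?_
    rintro ⟨⟨u1,u2⟩,v1,v2⟩ ⟨-, heq⟩ ⟨⟨a1,a2⟩,b1,b2⟩ ⟨-, heq'⟩ hfe
    simp only [act, aAct, Prod.mk.injEq] at heq heq'
    simp only [Prod.mk.injEq] at hfe ⊢
    omega
  · refine card_le_of_coords N _ (fun p hp => hp.1) (fun p => (p.1.1, p.2.1))
      (fun p hp => by have := Pset_bounds hp; tauto) ?_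
    rintro ⟨⟨u1,u2⟩,v1,v2⟩ ⟨-, heq⟩ ⟨⟨a1,a2⟩,b1,b2⟩ ⟨-, heq'⟩ hfe
    simp only [act, aAct, Prod.mk.injEq] at heq heq'
    simp only [Prod.mk.injEq] at hfe ⊢
    omega
  · have hemp : FixP N (⟨-1,1,-1,0⟩ : M2) (⟨1,0,0,1⟩ : M2) = ∅ := by
      ext ⟨⟨u1,u2⟩,v1,v2⟩
      simp only [FixP, Set.mem_setOf_eq, Set.mem_empty_iff_false, iff_false]
      rintro ⟨⟨h1, h2, h3, -, -⟩, heq⟩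
      simp only [act, aAct, Prod.mk.injEq] at heq
      simp only [Prod.mk.injEq] at h1 h2 h3
      omega
    rw [hemp]
    simp
  · have hemp : FixP N (⟨-1,1,-1,0⟩ : M2) (⟨0,-1,1,0⟩ : M2) = ∅ := by
      ext ⟨⟨u1,u2⟩,v1,v2⟩
      simp only [FixP, Set.mem_setOf_eq, Set.mem_empty_iff_false, iff_false]
      rintro ⟨⟨h1, h2, h3, -, -⟩, heq⟩
      simp only [act, aAct, Prod.mk.injEq] at heq
      simp only [Prod.mk.injEq] at h1 h2 h3
      omega
    rw [hemp]
    simp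
  · have hemp : FixP N (⟨-1,1,-1,0⟩ : M2) (⟨-1,0,0,-1⟩ : M2) = ∅ := by
      ext ⟨⟨u1,u2⟩,v1,v2⟩
      simp only [FixP, Set.mem_setOf_eq, Set.mem_empty_iff_false, iff_false]
      rintro ⟨⟨h1, h2, h3, -, -⟩, heq⟩
      simp only [act, aAct, Prod.mk.injEq] at heq
      simp only [Prod.mk.injEq] at h1 h2 h3
      omega
    rw [hemp]
    simp
  · have hemp : FixP N (⟨-1,1,-1,0⟩ : M2) (⟨0,1,-1,0⟩ : M2) = ∅ := by
      ext ⟨⟨u1,u2⟩,v1,v2⟩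
      simp only [FixP, Set.mem_setOf_eq, Set.mem_empty_iff_false, iff_false]
      rintro ⟨⟨h1, h2, h3, -, -⟩, heq⟩
      simp only [act, aAct, Prod.mk.injEq] at heq
      simp only [Prod.mk.injEq] at h1 h2 h3
      omega
    rw [hemp]
    simp
  · have hemp : FixP N (⟨-1,1,-1,0⟩ : M2) (⟨1,0,0,-1⟩ : M2) = ∅ := by
      ext ⟨⟨u1,u2⟩,v1,v2⟩
      simp only [FixP, Set.mem_setOf_eq, Set.mem_empty_iff_false, iff_false]
      rintro ⟨⟨h1, h2, h3, -, -⟩, heq⟩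
      simp only [act, aAct, Prod.mk.injEq] at heq
      simp only [Prod.mk.injEq] at h1 h2 h3
      omega
    rw [hemp]
    simp
  · have hemp : FixP N (⟨-1,1,-1,0⟩ : M2) (⟨-1,0,0,1⟩ : M2) = ∅ := by
      ext ⟨⟨u1,u2⟩,v1,v2⟩
      simp only [FixP, Set.mem_setOf_eq, Set.mem_empty_iff_false, iff_false]
      rintro ⟨⟨h1, h2, h3, -, -⟩, heq⟩
      simp only [act, aAct, Prod.mk.injEq] at heq
      simp only [Prod.mk.injEq] at h1 h2 h3
      omega
    rw [hemp]
    simp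
  · have hemp : FixP N (⟨-1,1,-1,0⟩ : M2) (⟨0,1,1,0⟩ : M2) = ∅ := by
      ext ⟨⟨u1,u2⟩,v1,v2⟩
      simp only [FixP, Set.mem_setOf_eq, Set.mem_empty_iff_false, iff_false]
      rintro ⟨⟨h1, h2, h3, -, -⟩, heq⟩
      simp only [act, aAct, Prod.mk.injEq] at heq
      simp only [Prod.mk.injEq] at h1 h2 h3
      omega
    rw [hemp]
    simp
  · have hemp : FixP N (⟨-1,1,-1,0⟩ : M2) (⟨0,-1,-1,0⟩ : M2) = ∅ := by
      ext ⟨⟨u1,u2⟩,v1,v2⟩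
      simp only [FixP, Set.mem_setOf_eq, Set.mem_empty_iff_false, iff_false]
      rintro ⟨⟨h1, h2, h3, -, -⟩, heq⟩
      simp only [act, aAct, Prod.mk.injEq] at heq
      simp only [Prod.mk.injEq] at h1 h2 h3
      omega
    rw [hemp]
    simp
  · have hemp : FixP N (⟨0,-1,1,-1⟩ : M2) (⟨1,0,0,1⟩ : M2) = ∅ := by
      ext ⟨⟨u1,u2⟩,v1,v2⟩
      simp only [FixP, Set.mem_setOf_eq, Set.mem_empty_iff_false, iff_false]
      rintro ⟨⟨h1, h2, h3, -, -⟩, heq⟩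
      simp only [act, aAct, Prod.mk.injEq] at heq
      simp only [Prod.mk.injEq] at h1 h2 h3
      omega
    rw [hemp]
    simp
  · have hemp : FixP N (⟨0,-1,1,-1⟩ : M2) (⟨0,-1,1,0⟩ : M2) = ∅ := by
      ext ⟨⟨u1,u2⟩,v1,v2⟩
      simp only [FixP, Set.mem_setOf_eq, Set.mem_empty_iff_false, iff_false]
      rintro ⟨⟨h1, h2, h3, -, -⟩, heq⟩
      simp only [act, aAct, Prod.mk.injEq] at heq
      simp only [Prod.mk.injEq] at h1 h2 h3
      omega
    rw [hemp]
    simp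
  · have hemp : FixP N (⟨0,-1,1,-1⟩ : M2) (⟨-1,0,0,-1⟩ : M2) = ∅ := by
      ext ⟨⟨u1,u2⟩,v1,v2⟩
      simp only [FixP, Set.mem_setOf_eq, Set.mem_empty_iff_false, iff_false]
      rintro ⟨⟨h1, h2, h3, -, -⟩, heq⟩
      simp only [act, aAct, Prod.mk.injEq] at heq
      simp only [Prod.mk.injEq] at h1 h2 h3
      omega
    rw [hemp]
    simp
  · have hemp : FixP N (⟨0,-1,1,-1⟩ : M2) (⟨0,1,-1,0⟩ : M2) = ∅ := by
      ext ⟨⟨u1,u2⟩,v1,v2⟩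
      simp only [FixP, Set.mem_setOf_eq, Set.mem_empty_iff_false, iff_false]
      rintro ⟨⟨h1, h2, h3, -, -⟩, heq⟩
      simp only [act, aAct, Prod.mk.injEq] at heq
      simp only [Prod.mk.injEq] at h1 h2 h3
      omega
    rw [hemp]
    simp
  · have hemp : FixP N (⟨0,-1,1,-1⟩ : M2) (⟨1,0,0,-1⟩ : M2) = ∅ := by
      ext ⟨⟨u1,u2⟩,v1,v2⟩
      simp only [FixP, Set.mem_setOf_eq, Set.mem_empty_iff_false, iff_false]
      rintro ⟨⟨h1, h2, h3, -, -⟩, heq⟩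
      simp only [act, aAct, Prod.mk.injEq] at heq
      simp only [Prod.mk.injEq] at h1 h2 h3
      omega
    rw [hemp]
    simp
  · have hemp : FixP N (⟨0,-1,1,-1⟩ : M2) (⟨-1,0,0,1⟩ : M2) = ∅ := by
      ext ⟨⟨u1,u2⟩,v1,v2⟩
      simp only [FixP, Set.mem_setOf_eq, Set.mem_empty_iff_false, iff_false]
      rintro ⟨⟨h1, h2, h3, -, -⟩, heq⟩
      simp only [act, aAct, Prod.mk.injEq] at heq
      simp only [Prod.mk.injEq] at h1 h2 h3
      omega
    rw [hemp]
    simp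
  · have hemp : FixP N (⟨0,-1,1,-1⟩ : M2) (⟨0,1,1,0⟩ : M2) = ∅ := by
      ext ⟨⟨u1,u2⟩,v1,v2⟩
      simp only [FixP, Set.mem_setOf_eq, Set.mem_empty_iff_false, iff_false]
      rintro ⟨⟨h1, h2, h3, -, -⟩, heq⟩
      simp only [act, aAct, Prod.mk.injEq] at heq
      simp only [Prod.mk.injEq] at h1 h2 h3
      omega
    rw [hemp]
    simp
  · have hemp : FixP N (⟨0,-1,1,-1⟩ : M2) (⟨0,-1,-1,0⟩ : M2) = ∅ := by
      ext ⟨⟨u1,u2⟩,v1,v2⟩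
      simp only [FixP, Set.mem_setOf_eq, Set.mem_empty_iff_false, iff_false]
      rintro ⟨⟨h1, h2, h3, -, -⟩, heq⟩
      simp only [act, aAct, Prod.mk.injEq] at heq
      simp only [Prod.mk.injEq] at h1 h2 h3
      omega
    rw [hemp]
    simp
  · have hemp : FixP N (⟨1,-1,0,-1⟩ : M2) (⟨1,0,0,1⟩ : M2) = ∅ := by
      ext ⟨⟨u1,u2⟩,v1,v2⟩
      simp only [FixP, Set.mem_setOf_eq, Set.mem_empty_iff_false, iff_false]
      rintro ⟨⟨h1, h2, h3, -, -⟩, heq⟩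
      simp only [act, aAct, Prod.mk.injEq] at heq
      simp only [Prod.mk.injEq] at h1 h2 h3
      omega
    rw [hemp]
    simp
  · have hemp : FixP N (⟨1,-1,0,-1⟩ : M2) (⟨0,-1,1,0⟩ : M2) = ∅ := by
      ext ⟨⟨u1,u2⟩,v1,v2⟩
      simp only [FixP, Set.mem_setOf_eq, Set.mem_empty_iff_false, iff_false]
      rintro ⟨⟨h1, h2, h3, -, -⟩, heq⟩
      simp only [act, aAct, Prod.mk.injEq] at heq
      simp only [Prod.mk.injEq] at h1 h2 h3
      omega
    rw [hemp]
    simp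
  · refine card_le_of_coords N _ (fun p hp => hp.1) (fun p => (p.1.1, p.1.2))
      (fun p hp => by have := Pset_bounds hp; tauto) ?_
    rintro ⟨⟨u1,u2⟩,v1,v2⟩ ⟨-, heq⟩ ⟨⟨a1,a2⟩,b1,b2⟩ ⟨-, heq'⟩ hfe
    simp only [act, aAct, Prod.mk.injEq] at heq heq'
    simp only [Prod.mk.injEq] at hfe ⊢
    omega
  · have hemp : FixP N (⟨1,-1,0,-1⟩ : M2) (⟨0,1,-1,0⟩ : M2) = ∅ := by
      ext ⟨⟨u1,u2⟩,v1,v2⟩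
      simp only [FixP, Set.mem_setOf_eq, Set.mem_empty_iff_false, iff_false]
      rintro ⟨⟨h1, h2, h3, -, -⟩, heq⟩
      simp only [act, aAct, Prod.mk.injEq] at heq
      simp only [Prod.mk.injEq] at h1 h2 h3
      omega
    rw [hemp]
    simp
  · refine card_le_of_coords N _ (fun p hp => hp.1) (fun p => (p.1.1, p.1.2))
      (fun p hp => by have := Pset_bounds hp; tauto) ?_
    rintro ⟨⟨u1,u2⟩,v1,v2⟩ ⟨-, heq⟩ ⟨⟨a1,a2⟩,b1,b2⟩ ⟨-, heq'⟩ hfe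
    simp only [act, aAct, Prod.mk.injEq] at heq heq'
    simp only [Prod.mk.injEq] at hfe ⊢
    omega
  · refine card_le_of_coords N _ (fun p hp => hp.1) (fun p => (p.1.1, p.1.2))
      (fun p hp => by have := Pset_bounds hp; tauto) ?_
    rintro ⟨⟨u1,u2⟩,v1,v2⟩ ⟨-, heq⟩ ⟨⟨a1,a2⟩,b1,b2⟩ ⟨-, heq'⟩ hfe
    simp only [act, aAct, Prod.mk.injEq] at heq heq'
    simp only [Prod.mk.injEq] at hfe ⊢
    omega
  · refine card_le_of_coords N _ (fun p hp => hp.1) (fun p => (p.1.1, p.1.2))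
      (fun p hp => by have := Pset_bounds hp; tauto) ?_
    rintro ⟨⟨u1,u2⟩,v1,v2⟩ ⟨-, heq⟩ ⟨⟨a1,a2⟩,b1,b2⟩ ⟨-, heq'⟩ hfe
    simp only [act, aAct, Prod.mk.injEq] at heq heq'
    simp only [Prod.mk.injEq] at hfe ⊢
    omega
  · refine card_le_of_coords N _ (fun p hp => hp.1) (fun p => (p.1.1, p.1.2))
      (fun p hp => by have := Pset_bounds hp; tauto) ?_
    rintro ⟨⟨u1,u2⟩,v1,v2⟩ ⟨-, heq⟩ ⟨⟨a1,a2⟩,b1,b2⟩ ⟨-, heq'⟩ hfe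
    simp only [act, aAct, Prod.mk.injEq] at heq heq'
    simp only [Prod.mk.injEq] at hfe ⊢
    omega

/-! ### the union bound -/

def Gfin47 : Finset (M2 × M2) := Gfin.erase (idM, idM)

lemma Gfin47_card : Gfin47.card = 47 := by decide

lemma BigFix_bound (N : ℕ) : (BigFix N).ncard ≤ 47 * (2*N+1)^2 := by
  classical
  have hsub : BigFix N ⊆ ↑(Gfin47.biUnion (fun g => (FixP_finite N g.1 g.2).toFinset)) := by
    rintro p ⟨hpP, R, hR, A, hA, hne, hfix⟩
    simp only [Finset.coe_biUnion, Set.mem_iUnion, Finset.mem_coe, Set.Finite.mem_toFinset]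
    refine ⟨(R, A), ?_, hpP, hfix⟩
    refine Finset.mem_erase.mpr ⟨?_, ?_⟩
    · intro hcon
      rw [Prod.mk.injEq] at hcon
      exact hne ⟨hcon.1, hcon.2⟩
    · rw [Gfin, List.mem_toFinset]
      exact List.pair_mem_product.mpr ⟨hR, hA⟩
  calc (BigFix N).ncard
      ≤ (↑(Gfin47.biUnion (fun g => (FixP_finite N g.1 g.2).toFinset)) : Set V).ncard :=
        Set.ncard_le_ncard hsub (Finset.finite_toSet _)
    _ = (Gfin47.biUnion (fun g => (FixP_finite N g.1 g.2).toFinset)).card :=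
        Set.ncard_coe_finset _
    _ ≤ ∑ g ∈ Gfin47, ((FixP_finite N g.1 g.2).toFinset).card := Finset.card_biUnion_le
    _ ≤ Gfin47.card * ((2*N+1)^2) := by
        rw [← smul_eq_mul]
        refine Finset.sum_le_card_nsmul _ _ _ ?_
        intro g hg
        have hmem := Gfin_mem (Finset.mem_of_mem_erase hg)
        have hne : ¬(g.1 = idM ∧ g.2 = idM) := by
          intro hcon
          have : g = (idM, idM) := Prod.ext hcon.1 hcon.2
          exact (Finset.ne_of_mem_erase hg) this
        have := FixP_bound N g.1 hmem.1 g.2 hmem.2 hne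
        rwa [Set.ncard_eq_toFinset_card _ (FixP_finite N g.1 g.2)] at this
    _ = 47 * (2*N+1)^2 := by rw [Gfin47_card]

/-! ### counting the width-compatible pairs -/

def Wset (N : ℕ) : Set (ℤ × ℤ) := {q | wOK N q.1 q.2}

lemma Wset_finite (N : ℕ) : (Wset N).Finite := by
  have : Wset N ⊆ Set.Icc (-(N:ℤ)) N ×ˢ Set.Icc (-(N:ℤ)) N := by
    intro q hq
    have := wOK_bounds hq
    exact ⟨Set.mem_Icc.mpr ⟨this.1, this.2.1⟩, Set.mem_Icc.mpr ⟨this.2.2.1, this.2.2.2⟩⟩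
  exact ((Set.finite_Icc _ _).prod (Set.finite_Icc _ _)).subset this

lemma Wset_card (N : ℕ) : (Wset N).ncard ≤ 3 * N * N := by
  classical
  have htgt : ((Finset.Icc (0:ℤ) 2 ×ˢ (Finset.Ico (0:ℤ) N ×ˢ Finset.Ico (0:ℤ) N) :
      Finset (ℤ × ℤ × ℤ)) : Set (ℤ × ℤ × ℤ)).ncard = 3 * N * N := by
    rw [Set.ncard_coe_finset, Finset.card_product, Finset.card_product,
      Int.card_Icc, Int.card_Ico]
    have e1 : ((2:ℤ) + 1 - 0).toNat = 3 := rfl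
    have e2 : ((N:ℤ) - 0).toNat = N := by omega
    rw [e1, e2]
    ring
  rw [← htgt]
  set f : ℤ × ℤ → ℤ × ℤ × ℤ := fun q =>
    if 0 ≤ q.1 ∧ 0 ≤ q.2 then ((0:ℤ), q.1, q.2)
    else if q.1 ≤ 0 ∧ q.2 ≤ 0 then (1, -q.1, -q.2)
    else if q.2 < 0 then (2, q.1 - 1, -q.2 - 1)
    else (2, (N:ℤ) - 1 - q.2, (N:ℤ) - 1 + q.1) with hf
  refine Set.ncard_le_ncard_of_injOn f ?_ ?_ (Finset.finite_toSet _)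
  · rintro ⟨s, t⟩ hq
    obtain ⟨a, ha⟩ := hq
    simp only [hf]
    split_ifs <;>
      simp only [Finset.coe_product, Set.mem_prod, Finset.mem_coe, Finset.mem_Icc,
        Finset.mem_Ico] <;>
      omega
  · rintro ⟨s, t⟩ hq ⟨s', t'⟩ hq' heq
    obtain ⟨a, ha⟩ := hq
    obtain ⟨a', ha'⟩ := hq'
    simp only [hf] at heq
    split_ifs at heq <;>
      (simp only [Prod.mk.injEq] at heq ⊢; omega)

lemma Pset_card (N : ℕ) : (Pset N).ncard ≤ (3 * N * N) * (3 * N * N) := by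
  classical
  have h1 : (Pset N).ncard ≤ (Wset N ×ˢ Wset N).ncard := by
    refine Set.ncard_le_ncard_of_injOn
      (fun p => ((p.1.1, p.2.1), (p.1.2, p.2.2))) ?_ ?_
      ((Wset_finite N).prod (Wset_finite N))
    · rintro ⟨⟨u1,u2⟩,v1,v2⟩ ⟨-, -, -, h4, h5⟩
      exact ⟨h4, h5⟩
    · rintro ⟨⟨u1,u2⟩,v1,v2⟩ - ⟨⟨a1,a2⟩,b1,b2⟩ - heq
      simp only [Prod.mk.injEq] at heq ⊢
      tauto
  have h2 : (Wset N ×ˢ Wset N).ncard = (Wset N).ncard * (Wset N).ncard := by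
    rw [← Nat.card_coe_set_eq, ← Nat.card_coe_set_eq]
    rw [← Nat.card_prod]
    exact Nat.card_congr (Equiv.Set.prod _ _)
  calc (Pset N).ncard ≤ (Wset N ×ˢ Wset N).ncard := h1
    _ = (Wset N).ncard * (Wset N).ncard := h2
    _ ≤ (3 * N * N) * (3 * N * N) := Nat.mul_le_mul (Wset_card N) (Wset_card N)

/-! ### final assembly -/

lemma T_nat_bound (N : ℕ) : 48 * T N ≤ 9*N^4 + 2256*(2*N+1)^2 := by
  have h1 : T N ≤ (Mins N).ncard := T_le_Mins N
  have h2 := Mins_split N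
  have h3 := free_bound N
  have h4 := BigFix_bound N
  have h5 := Pset_card N
  have h6 : (3 * N * N) * (3 * N * N) = 9 * N^4 := by ring
  calc 48 * T N ≤ 48 * (Mins N).ncard := Nat.mul_le_mul_left 48 h1
    _ ≤ 48 * ((MinsFree N).ncard + (BigFix N).ncard) := Nat.mul_le_mul_left 48 h2
    _ = 48 * (MinsFree N).ncard + 48 * (BigFix N).ncard := by ring
    _ ≤ 9*N^4 + 2256*(2*N+1)^2 := by
        have := Nat.mul_le_mul_left 48 h4
        omega

lemma T_real_bound {N : ℕ} (hN : 1 ≤ N) :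
    (T N : ℝ) / (N : ℝ)^4 ≤ 0.1875 + 423 / (N : ℝ) := by
  have hx : (1:ℝ) ≤ (N:ℝ) := by exact_mod_cast hN
  have hx0 : (0:ℝ) < (N:ℝ) := by linarith
  have key : 48 * (T N : ℝ) ≤ 9*(N:ℝ)^4 + 2256*(2*(N:ℝ)+1)^2 := by
    have := T_nat_bound N
    have hcast : ((48 * T N : ℕ) : ℝ) ≤ ((9*N^4 + 2256*(2*N+1)^2 : ℕ) : ℝ) := by
      exact_mod_cast this
    push_cast at hcast
    linarith
  rw [div_le_iff₀ (by positivity)]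
  have hexp : (0.1875 + 423 / (N:ℝ)) * (N:ℝ)^4 = 0.1875*(N:ℝ)^4 + 423*(N:ℝ)^3 := by
    field_simp
  rw [hexp]
  have hsq : (2*(N:ℝ)+1)^2 ≤ 9*(N:ℝ)^2 := by nlinarith
  have hcube : (N:ℝ)^2 ≤ (N:ℝ)^3 := by nlinarith
  nlinarith

/-- The grid `[N] × [N]` spans asymptotically at most `0.1875 · N⁴` distinct
triangles. -/
theorem grid_triangles_limsup :
    Filter.limsup (fun N : ℕ => (T N : ℝ) / (N : ℝ) ^ 4) Filter.atTop ≤ 0.1875 := by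
  have hle : (fun N : ℕ => (T N : ℝ) / (N : ℝ) ^ 4) ≤ᶠ[Filter.atTop]
      (fun N : ℕ => 0.1875 + 423 / (N : ℝ)) := by
    filter_upwards [Filter.eventually_ge_atTop 1] with N hN
    exact T_real_bound hN
  have htend : Filter.Tendsto (fun N : ℕ => 0.1875 + 423 / (N : ℝ)) Filter.atTop
      (nhds 0.1875) := by
    have h0 := tendsto_const_div_atTop_nhds_zero_nat (423 : ℝ)
    have := Filter.Tendsto.const_add (0.1875 : ℝ) h0
    simpa using this
  have hcb : Filter.IsCoboundedUnder (· ≤ ·) Filter.atTop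
      (fun N : ℕ => (T N : ℝ) / (N : ℝ) ^ 4) := by
    refine Filter.isCoboundedUnder_le_of_eventually_le Filter.atTop (x := 0) ?_
    filter_upwards with N
    positivity
  have hbd : Filter.IsBoundedUnder (· ≤ ·) Filter.atTop
      (fun N : ℕ => 0.1875 + 423 / (N : ℝ)) := htend.isBoundedUnder_le
  calc Filter.limsup (fun N : ℕ => (T N : ℝ) / (N : ℝ) ^ 4) Filter.atTop
      ≤ Filter.limsup (fun N : ℕ => 0.1875 + 423 / (N : ℝ)) Filter.atTop :=
        Filter.limsup_le_limsup hle hcb hbd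
    _ = 0.1875 := htend.limsup_eq
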